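/- Let P be a sub-uniform random variable with P > 0 almost surely. If E[−log P] = 1 (= E[−log U] for U uniform on [0,1]), then P is uniformly distributed on [0,1]. -/

import Mathlib

open MeasureTheory Set Filter Topology

/-!
Let `W ν t = ∫ (t - x)⁺ dν(x)` for the law `ν` of `P`. Sub-uniformity tested on the convex wedges
`x ↦ (t - x)⁺` gives `W ν t ≤ t ^ 2 / 2` on `[0, 1]`, the value for the uniform law; at `t = 1`
this says `E P ≥ 1 / 2`. For `0 < x ≤ 1` one has `x - log x - 1 = ∫₀¹ (t - x)⁺ / t ^ 2 dt`, so
by Tonelli `∫₀¹ W ν t / t ^ 2 dt = E P + E[-log P] - 1 = E P ≥ 1 / 2 = ∫₀¹ (t ^ 2 / 2) / t ^ 2 dt`.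
Hence `W ν t = t ^ 2 / 2` almost everywhere, and then everywhere on `(0, 1)` since `W ν` is
continuous. As `ν (Iic t)` is the derivative of `W ν`, the distribution function of `ν` is the
identity on `(0, 1)`.
-/

lemma convexOn_max_sub_zero (t : ℝ) : ConvexOn ℝ univ fun x : ℝ => max (t - x) 0 :=
  ((convexOn_const t convex_univ).sub (concaveOn_id convex_univ)).sup
    (convexOn_const 0 convex_univ)

lemma continuous_max_sub_zero (t : ℝ) : Continuous fun x : ℝ => max (t - x) 0 := by
  fun_prop

lemma lintegral_max_sub_div_sq {x : ℝ} (hx0 : 0 < x) (hx1 : x ≤ 1) :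
    ∫⁻ t in Ioo 0 1, ENNReal.ofReal (max (t - x) 0 / t ^ 2) =
      ENNReal.ofReal (x - Real.log x - 1) := by
  have hderiv : ∀ t ∈ uIcc x 1,
      HasDerivAt (fun t => Real.log t + x / t) ((t - x) / t ^ 2) t := by
    intro t ht
    rw [uIcc_of_le hx1] at ht
    have ht0 : t ≠ 0 := (hx0.trans_le ht.1).ne'
    have h := (Real.hasDerivAt_log ht0).fun_add ((hasDerivAt_inv ht0).const_mul x)
    exact h.congr_deriv (by field_simp; ring)
  have hcont : ContinuousOn (fun t : ℝ => (t - x) / t ^ 2) (Icc x 1) :=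
    (continuousOn_id.sub continuousOn_const).div (continuousOn_pow 2)
      fun t ht => pow_ne_zero 2 (hx0.trans_le ht.1).ne'
  have hftc : ∫ t in x..1, (t - x) / t ^ 2 = x - Real.log x - 1 := by
    rw [intervalIntegral.integral_eq_sub_of_hasDerivAt hderiv
      (hcont.mono (uIcc_of_le hx1).subset).intervalIntegrable]
    simp [hx0.ne']
    ring
  rw [setLIntegral_congr Ioo_ae_eq_Ioc, ← Ioc_union_Ioc_eq_Ioc hx0.le hx1,
    lintegral_union measurableSet_Ioc (Ioc_disjoint_Ioc_of_le le_rfl)]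
  have hleft : ∫⁻ t in Ioc 0 x, ENNReal.ofReal (max (t - x) 0 / t ^ 2) = 0 := by
    rw [setLIntegral_congr_fun measurableSet_Ioc
      (g := 0) fun t ht => by simp [max_eq_right (sub_nonpos.2 ht.2)]]
    simp
  have hright : ∫⁻ t in Ioc x 1, ENNReal.ofReal (max (t - x) 0 / t ^ 2)
      = ∫⁻ t in Ioc x 1, ENNReal.ofReal ((t - x) / t ^ 2) :=
    setLIntegral_congr_fun measurableSet_Ioc fun t ht => by
      rw [max_eq_left (sub_nonneg.2 ht.1.le)]
  rw [hleft, hright, zero_add, ← ofReal_integral_eq_lintegral_ofReal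
    (hcont.integrableOn_Icc.mono_set Ioc_subset_Icc_self)
    ((ae_restrict_iff' measurableSet_Ioc).2 (ae_of_all _ fun t ht =>
      div_nonneg (sub_nonneg.2 ht.1.le) (sq_nonneg t))),
    ← intervalIntegral.integral_of_le hx1, hftc]

lemma eqOn_of_le_of_setLIntegral_le {X : Type*} [TopologicalSpace X] [MeasurableSpace X]
    [OpensMeasurableSpace X] (μ : Measure X) [μ.IsOpenPosMeasure] {f g : X → ℝ} {s : Set X}
    (hs : IsOpen s) (hf : ContinuousOn f s) (hg : ContinuousOn g s) (hf0 : ∀ x ∈ s, 0 ≤ f x)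
    (hfg : ∀ x ∈ s, f x ≤ g x) (hfin : ∫⁻ x in s, ENNReal.ofReal (f x) ∂μ ≠ ⊤)
    (hint : ∫⁻ x in s, ENNReal.ofReal (g x) ∂μ ≤ ∫⁻ x in s, ENNReal.ofReal (f x) ∂μ) :
    EqOn f g s := by
  have hae : (fun x => ENNReal.ofReal (f x)) =ᵐ[μ.restrict s] fun x => ENNReal.ofReal (g x) :=
    ae_eq_of_ae_le_of_lintegral_le ((ae_restrict_iff' hs.measurableSet).2
      (ae_of_all _ fun x hx => ENNReal.ofReal_le_ofReal (hfg x hx))) hfin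
      (hg.aemeasurable hs.measurableSet).ennreal_ofReal hint
  refine Measure.eqOn_open_of_ae_eq (μ := μ) ?_ hs hf hg
  filter_upwards [hae, ae_restrict_mem hs.measurableSet] with x hx hxs
  exact (ENNReal.ofReal_eq_ofReal_iff (hf0 x hxs) ((hf0 x hxs).trans (hfg x hxs))).1 hx

/-- By Fubini, `integratedCDF ν t = ∫ s in Iic t, ν.real (Iic s)`. -/
noncomputable def integratedCDF (ν : Measure ℝ) (t : ℝ) : ℝ :=
  ∫ x, max (t - x) 0 ∂ν

section IntegratedCDF

variable {ν : Measure ℝ}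

lemma integrable_max_sub_zero [IsFiniteMeasure ν] (hid : Integrable (fun x => x) ν) (t : ℝ) :
    Integrable (fun x => max (t - x) 0) ν :=
  ((integrable_const t).sub hid).pos_part

/-- `ν.real (Iic s)` is a subgradient of the convex function `integratedCDF ν` at `s`. -/
lemma mul_measureReal_Iic_le_integratedCDF_sub [IsFiniteMeasure ν]
    (hid : Integrable (fun x => x) ν) (s t : ℝ) :
    (t - s) * ν.real (Iic s) ≤ integratedCDF ν t - integratedCDF ν s := by
  rw [integratedCDF, integratedCDF, ← integral_sub (integrable_max_sub_zero hid t)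
    (integrable_max_sub_zero hid s), mul_comm, ← smul_eq_mul,
    ← integral_indicator_const _ measurableSet_Iic]
  refine integral_mono ((integrable_const _).indicator measurableSet_Iic)
    ((integrable_max_sub_zero hid t).sub (integrable_max_sub_zero hid s)) fun x => ?_
  by_cases hx : x ≤ s
  · simp only [indicator_of_mem (mem_Iic.2 hx), max_eq_left (sub_nonneg.2 hx)]
    linarith [le_max_left (t - x) 0]
  · simp [indicator_of_notMem (notMem_Iic.2 (not_le.1 hx)),
      max_eq_right (sub_nonpos.2 (not_le.1 hx).le)]

lemma lipschitzWith_integratedCDF [IsProbabilityMeasure ν] (hid : Integrable (fun x => x) ν) :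
    LipschitzWith 1 (integratedCDF ν) := by
  refine LipschitzWith.of_le_add_mul 1 fun s t => ?_
  have h := mul_measureReal_Iic_le_integratedCDF_sub hid s t
  have h0 : 0 ≤ ν.real (Iic s) := measureReal_nonneg
  have h1 : ν.real (Iic s) ≤ 1 := measureReal_le_one
  rw [NNReal.coe_one, one_mul, Real.dist_eq]
  cases abs_cases (s - t) <;> nlinarith

lemma measureReal_Iic_eq_of_integratedCDF_eq [IsFiniteMeasure ν]
    (hid : Integrable (fun x => x) ν) {a b : ℝ}
    (hW : ∀ t ∈ Ioo a b, integratedCDF ν t = t ^ 2 / 2) {t : ℝ} (ht : t ∈ Ioo a b) :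
    ν.real (Iic t) = t := by
  have hsub : ∀ u ∈ Ioo a b, (u - t) * ν.real (Iic t) ≤ (u - t) * ((u + t) / 2) := by
    intro u hu
    have h := mul_measureReal_Iic_le_integratedCDF_sub hid t u
    rw [hW u hu, hW t ht] at h
    linarith
  have hlim : Tendsto (fun u => (u + t) / 2) (𝓝 t) (𝓝 t) := by
    simpa using ((continuous_id.add (continuous_const (y := t))).div_const 2).tendsto t
  apply le_antisymm
  · refine ge_of_tendsto (hlim.mono_left (nhdsWithin_le_nhds (s := Ioi t))) ?_
    filter_upwards [Ioo_mem_nhdsGT ht.2] with u hu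
    exact le_of_mul_le_mul_left (hsub u ⟨ht.1.trans hu.1, hu.2⟩) (sub_pos.2 hu.1)
  · refine le_of_tendsto (hlim.mono_left (nhdsWithin_le_nhds (s := Iio t))) ?_
    filter_upwards [Ioo_mem_nhdsLT ht.1] with u hu
    exact (mul_le_mul_left_of_neg (sub_neg.2 hu.2)).1 (hsub u ⟨hu.1, hu.2.trans ht.2⟩)

lemma integratedCDF_one [IsProbabilityMeasure ν] (hν : ∀ᵐ x ∂ν, x ≤ 1)
    (hid : Integrable (fun x => x) ν) : integratedCDF ν 1 = 1 - ∫ x, x ∂ν := by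
  rw [integratedCDF, integral_congr_ae (hν.mono fun x hx => max_eq_left (sub_nonneg.2 hx)),
    integral_sub (integrable_const 1) hid]
  simp

lemma lintegral_integratedCDF_div_sq [IsProbabilityMeasure ν]
    (hν : ∀ᵐ x ∂ν, x ∈ Ioc 0 1) (hid : Integrable (fun x => x) ν)
    (hlog : Integrable (fun x => -Real.log x) ν) :
    ∫⁻ t in Ioo 0 1, ENNReal.ofReal (integratedCDF ν t / t ^ 2) =
      ENNReal.ofReal (∫ x, x ∂ν + ∫ x, -Real.log x ∂ν - 1) := by
  have hsum : Integrable (fun x => x + -Real.log x) ν := hid.add hlog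
  have hint : Integrable (fun x => x + -Real.log x - 1) ν := hsum.sub (integrable_const 1)
  have hnonneg : 0 ≤ᵐ[ν] fun x => x + -Real.log x - 1 :=
    hν.mono fun x hx => show 0 ≤ x + -Real.log x - 1 by
      linarith [Real.log_le_sub_one_of_pos hx.1]
  calc ∫⁻ t in Ioo 0 1, ENNReal.ofReal (integratedCDF ν t / t ^ 2)
      = ∫⁻ t in Ioo 0 1, ∫⁻ x, ENNReal.ofReal (max (t - x) 0 / t ^ 2) ∂ν := by
        refine lintegral_congr fun t => ?_
        rw [integratedCDF, ← integral_div, ofReal_integral_eq_lintegral_ofReal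
          ((integrable_max_sub_zero hid t).div_const _) (ae_of_all _ fun x => by positivity)]
    _ = ∫⁻ x, (∫⁻ t in Ioo 0 1, ENNReal.ofReal (max (t - x) 0 / t ^ 2)) ∂ν :=
        (lintegral_lintegral_swap (Measurable.aemeasurable (by fun_prop))).symm
    _ = ∫⁻ x, ENNReal.ofReal (x + -Real.log x - 1) ∂ν :=
        lintegral_congr_ae (hν.mono fun x hx =>
          (lintegral_max_sub_div_sq hx.1 hx.2).trans (by simp only [sub_eq_add_neg]))
    _ = ENNReal.ofReal (∫ x, x ∂ν + ∫ x, -Real.log x ∂ν - 1) := by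
        rw [← ofReal_integral_eq_lintegral_ofReal hint hnonneg,
          integral_sub hsum (integrable_const 1), integral_add hid hlog]
        simp

lemma integratedCDF_eq_of_lintegral_div_sq_ge [IsProbabilityMeasure ν]
    (hid : Integrable (fun x => x) ν) (hW : ∀ t ∈ Ioo (0 : ℝ) 1, integratedCDF ν t ≤ t ^ 2 / 2)
    {m : ℝ} (hm : 1 / 2 ≤ m)
    (hint : ∫⁻ t in Ioo 0 1, ENNReal.ofReal (integratedCDF ν t / t ^ 2) = ENNReal.ofReal m)
    {t : ℝ} (ht : t ∈ Ioo 0 1) :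
    integratedCDF ν t = t ^ 2 / 2 := by
  have hcont : ContinuousOn (fun t => integratedCDF ν t / t ^ 2) (Ioo 0 1) :=
    (lipschitzWith_integratedCDF hid).continuous.continuousOn.div (continuousOn_pow 2)
      fun t ht => pow_ne_zero 2 ht.1.ne'
  have hratio := eqOn_of_le_of_setLIntegral_le volume isOpen_Ioo hcont
    (continuousOn_const (c := 1 / 2))
    (fun t _ => div_nonneg (integral_nonneg fun _ => le_max_right _ _) (sq_nonneg t))
    (fun t ht => (div_le_iff₀ (pow_pos ht.1 2)).2 (by linarith [hW t ht]))
    (by rw [hint]; exact ENNReal.ofReal_ne_top)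
    (by
      rw [hint, setLIntegral_const, Real.volume_Ioo, sub_zero, ENNReal.ofReal_one, mul_one]
      exact ENNReal.ofReal_le_ofReal hm) ht
  rw [div_eq_iff (pow_pos ht.1 2).ne'] at hratio
  linarith

end IntegratedCDF

lemma integratedCDF_volume_restrict_Icc {t : ℝ} (ht : t ∈ Icc (0 : ℝ) 1) :
    integratedCDF (volume.restrict (Icc 0 1)) t = t ^ 2 / 2 := by
  have hint : ∀ a b : ℝ, IntervalIntegrable (fun u => max (t - u) 0) volume a b :=
    fun a b => (continuous_max_sub_zero t).intervalIntegrable a b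
  rw [integratedCDF, integral_Icc_eq_integral_Ioc, ← intervalIntegral.integral_of_le zero_le_one,
    ← intervalIntegral.integral_add_adjacent_intervals (hint 0 t) (hint t 1),
    intervalIntegral.integral_congr (g := fun u => t - u) fun u hu => max_eq_left ?_,
    intervalIntegral.integral_congr (g := fun _ => 0) fun u hu => max_eq_right ?_]
  · rw [intervalIntegral.integral_sub intervalIntegrable_const
      intervalIntegral.intervalIntegrable_id]
    simp
    ring
  · rw [uIcc_of_le ht.2] at hu
    linarith [hu.1]
  · rw [uIcc_of_le ht.1] at hu
    linarith [hu.2]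

lemma eq_volume_restrict_Icc_of_measureReal_Iic {ν : Measure ℝ} [IsProbabilityMeasure ν]
    (hν : ∀ᵐ x ∂ν, x ∈ Ioc 0 1) (hF : ∀ t ∈ Ioo 0 1, ν.real (Iic t) = t) :
    ν = volume.restrict (Icc 0 1) := by
  refine Measure.ext_of_Iic _ _ fun a => ?_
  rw [Measure.restrict_apply measurableSet_Iic]
  rcases le_or_gt a 0 with ha | ha
  · rw [measure_eq_zero_iff_ae_notMem.2 (hν.mono fun x hx => notMem_Iic.2 (ha.trans_lt hx.1))]
    have hsub : Iic a ∩ Icc 0 1 ⊆ Icc 0 a := fun x hx => ⟨hx.2.1, hx.1⟩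
    exact (measure_mono_null hsub (by simp [Real.volume_Icc, ha])).symm
  rcases lt_or_ge a 1 with ha1 | ha1
  · have hset : Iic a ∩ Icc 0 1 = Icc 0 a := by
      ext x
      simp only [mem_inter_iff, mem_Iic, mem_Icc]
      grind
    rw [← ofReal_measureReal, hF a ⟨ha, ha1⟩, hset, Real.volume_Icc, sub_zero]
  · rw [(prob_compl_eq_zero_iff measurableSet_Iic).1
      (mem_ae_iff.1 (hν.mono fun x hx => hx.2.trans ha1)),
      inter_eq_right.2 fun x hx => hx.2.trans ha1, Real.volume_Icc]
    simp

theorem eq_volume_restrict_Icc_of_integratedCDF_le {ν : Measure ℝ} [IsProbabilityMeasure ν]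
    (hν : ∀ᵐ x ∂ν, x ∈ Ioc 0 1)
    (hW : ∀ t ∈ Icc (0 : ℝ) 1, integratedCDF ν t ≤ integratedCDF (volume.restrict (Icc 0 1)) t)
    (hlogint : Integrable (fun x => -Real.log x) ν) (hlog : ∫ x, -Real.log x ∂ν = 1) :
    ν = volume.restrict (Icc 0 1) := by
  have hid : Integrable (fun x => x) ν :=
    .of_mem_Icc 0 1 aemeasurable_id (hν.mono fun _ hx => Ioc_subset_Icc_self hx)
  have hWle : ∀ t ∈ Icc (0 : ℝ) 1, integratedCDF ν t ≤ t ^ 2 / 2 :=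
    fun t ht => (hW t ht).trans_eq (integratedCDF_volume_restrict_Icc ht)
  have hmean : 1 / 2 ≤ ∫ x, x ∂ν := by
    have h1 := hWle 1 ⟨zero_le_one, le_rfl⟩
    rw [integratedCDF_one (hν.mono fun _ hx => hx.2) hid] at h1
    linarith
  have hWeq : ∀ t ∈ Ioo (0 : ℝ) 1, integratedCDF ν t = t ^ 2 / 2 := fun t ht =>
    integratedCDF_eq_of_lintegral_div_sq_ge hid (fun t ht => hWle t (Ioo_subset_Icc_self ht))
      hmean (by rw [lintegral_integratedCDF_div_sq hν hid hlogint, hlog, add_sub_cancel_right]) ht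
  exact eq_volume_restrict_Icc_of_measureReal_Iic hν fun t ht =>
    measureReal_Iic_eq_of_integratedCDF_eq hid hWeq ht

/-- If `P` is sub-uniform with `P > 0` a.s. and
`E[−log P] = 1 = E[−log U]`, then `P` is uniformly distributed on `[0,1]`. -/
theorem subuniform_log_mean_eq_one_implies_uniform
    {Ω : Type*} [MeasurableSpace Ω] (μ : Measure Ω) [IsProbabilityMeasure μ]
    (P : Ω → ℝ) (hPmeas : Measurable P) (hPmem : ∀ ω, P ω ∈ Icc (0 : ℝ) 1)
    (hPpos : ∀ᵐ ω ∂μ, 0 < P ω)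
    (hcx : ∀ h : ℝ → ℝ, ConvexOn ℝ Set.univ h →
      Integrable (fun ω : Ω => h (P ω)) μ → IntegrableOn h (Icc (0 : ℝ) 1) volume →
      ∫ ω, h (P ω) ∂μ ≤ ∫ u in Icc (0 : ℝ) 1, h u)
    (hint : Integrable (fun ω : Ω => -Real.log (P ω)) μ)
    (hmean : ∫ ω, -Real.log (P ω) ∂μ = 1) :
    Measure.map P μ = volume.restrict (Icc (0 : ℝ) 1) := by
  have hP := hPmeas.aemeasurable (μ := μ)
  have := Measure.isProbabilityMeasure_map (μ := μ) hP
  have hPint : Integrable P μ := .of_mem_Icc 0 1 hP (ae_of_all _ hPmem)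
  have hlog : AEStronglyMeasurable (fun x => -Real.log x) (μ.map P) :=
    Real.measurable_log.neg.aestronglyMeasurable
  refine eq_volume_restrict_Icc_of_integratedCDF_le
    ((ae_map_iff hP measurableSet_Ioc).2 (hPpos.mono fun ω h => ⟨h, (hPmem ω).2⟩))
    (fun t _ => ?_) ((integrable_map_measure hlog hP).2 hint)
    ((integral_map hP hlog).trans hmean)
  rw [integratedCDF, integral_map hP (continuous_max_sub_zero t).aestronglyMeasurable]
  exact hcx _ (convexOn_max_sub_zero t) ((integrable_const t).sub hPint).pos_part
    (continuous_max_sub_zero t).integrableOn_Icc
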